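/- The mean velocity ⟨v⟩(T) = v₀ + (2κ tanh(κT/2)/(e^{-κT} - 1)) · v₀ tanh(κT)/κ is nonnegative exactly on the interval T ∈ [0, ln(√2 + 1)/κ] (for v₀ > 0), vanishing at T = ln(√2+1)/κ. -/
import Mathlib


/-- The mean velocity ⟨v⟩(T) of the paper. -/
noncomputable def meanVelocity (κ v₀ T : ℝ) : ℝ :=
  v₀ + (2 * κ * Real.tanh (κ * T / 2) / (Real.exp (-κ * T) - 1)) *
    (v₀ * Real.tanh (κ * T) / κ)

lemma tanh_exp (x : ℝ) : Real.tanh x = (Real.exp (2*x) - 1) / (Real.exp (2*x) + 1) := by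
  rw [Real.tanh_eq_sinh_div_cosh, Real.sinh_eq, Real.cosh_eq]
  have h : Real.exp (2*x) = Real.exp x * Real.exp x := by
    rw [← Real.exp_add]; ring_nf
  have hx : Real.exp x ≠ 0 := (Real.exp_pos x).ne'
  have hx2 : Real.exp (2*x) + 1 ≠ 0 := by positivity
  rw [Real.exp_neg]
  field_simp
  nlinarith [Real.exp_pos x]

lemma key (κ v₀ T : ℝ) (hκ : 0 < κ) (hT : 0 ≤ T) :
    meanVelocity κ v₀ T =
      v₀ * (1 + 2 * Real.exp (κ*T) - Real.exp (κ*T)^2) / (Real.exp (κ*T)^2 + 1) := by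
  rcases eq_or_lt_of_le hT with h | h
  · subst h
    simp [meanVelocity]
    ring
  · set u := Real.exp (κ*T) with hu
    have hu1 : 1 < u := by
      rw [hu, show (1:ℝ) = Real.exp 0 by simp]
      exact Real.exp_lt_exp.mpr (by positivity)
    have h1 : Real.tanh (κ*T/2) = (u - 1)/(u + 1) := by
      rw [tanh_exp, show 2*(κ*T/2) = κ*T by ring, ← hu]
    have h2 : Real.tanh (κ*T) = (u^2 - 1)/(u^2 + 1) := by
      rw [tanh_exp]
      have : Real.exp (2*(κ*T)) = u^2 := by
        rw [hu, sq, ← Real.exp_add]; ring_nf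
      rw [this]
    have h3 : Real.exp (-κ*T) - 1 = (1 - u)/u := by
      rw [show -κ*T = -(κ*T) by ring, Real.exp_neg, ← hu]
      field_simp
    rw [meanVelocity, h1, h2, h3]
    have hune : u ≠ 0 := by positivity
    have hup1 : u + 1 ≠ 0 := by positivity
    have hu21 : u^2 + 1 ≠ 0 := by positivity
    have h1u : 1 - u ≠ 0 := by linarith
    field_simp
    ring

theorem stmt_19 (κ v₀ : ℝ) (hκ : 0 < κ) (hv₀ : 0 < v₀) :
    (∀ T : ℝ, 0 ≤ T →
      (0 ≤ meanVelocity κ v₀ T ↔ T ≤ Real.log (Real.sqrt 2 + 1) / κ)) ∧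
    meanVelocity κ v₀ (Real.log (Real.sqrt 2 + 1) / κ) = 0 := by
  have hs2 : Real.sqrt 2 ^ 2 = 2 := Real.sq_sqrt (by norm_num)
  have hs2n : (0:ℝ) ≤ Real.sqrt 2 := Real.sqrt_nonneg 2
  have hs2p : (0:ℝ) < Real.sqrt 2 + 1 := by positivity
  have hlogpos : 0 ≤ Real.log (Real.sqrt 2 + 1) := by
    apply Real.log_nonneg; nlinarith
  constructor
  · intro T hT
    rw [key κ v₀ T hκ hT]
    set u := Real.exp (κ*T) with hu
    have hu1 : 1 ≤ u := by
      rw [hu, show (1:ℝ) = Real.exp 0 by simp]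
      exact Real.exp_le_exp.mpr (by positivity)
    have hu21 : (0:ℝ) < u^2 + 1 := by positivity
    constructor
    · intro h
      have hnum : 0 ≤ 1 + 2*u - u^2 := by
        by_contra hc
        push_neg at hc
        have : v₀ * (1 + 2*u - u^2) / (u^2+1) < 0 := by
          apply div_neg_of_neg_of_pos _ hu21
          nlinarith
        linarith
      have hule : u ≤ Real.sqrt 2 + 1 := by nlinarith
      have hkT : κ * T ≤ Real.log (Real.sqrt 2 + 1) :=
        (Real.le_log_iff_exp_le hs2p).mpr hule
      rw [le_div_iff₀ hκ]
      nlinarith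
    · intro h
      have : κ * T ≤ Real.log (Real.sqrt 2 + 1) := by
        rw [div_eq_mul_inv] at h
        calc κ * T ≤ κ * (Real.log (Real.sqrt 2 + 1) * κ⁻¹) :=
              mul_le_mul_of_nonneg_left h hκ.le
          _ = Real.log (Real.sqrt 2 + 1) := by field_simp
      have hule : u ≤ Real.sqrt 2 + 1 := by
        rw [hu, ← Real.exp_log hs2p]
        exact Real.exp_le_exp.mpr this
      apply div_nonneg _ hu21.le
      nlinarith [mul_nonneg (sub_nonneg.mpr hule) (by linarith : (0:ℝ) ≤ u - 1 + Real.sqrt 2), hv₀.le, mul_nonneg hv₀.le (sub_nonneg.mpr hule)]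
  · have hT0 : 0 ≤ Real.log (Real.sqrt 2 + 1) / κ := by positivity
    rw [key κ v₀ _ hκ hT0]
    have : κ * (Real.log (Real.sqrt 2 + 1) / κ) = Real.log (Real.sqrt 2 + 1) := by
      field_simp
    rw [this, Real.exp_log hs2p]
    have : 1 + 2*(Real.sqrt 2 + 1) - (Real.sqrt 2 + 1)^2 = 0 := by nlinarith
    rw [this]
    simp
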